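/- For every k ≥ 0, every session type T, every variable x, and every μ-calculus formula φ: T ⊨_{e,k} νx.φ if and only if T ⊨_{e,k} φ[νx.φ/x]. -/
import Mathlib


namespace SessionCF

/-- Polarity of an action: `send` is `!`, `recv` is `?`.  Also used for the
choice constructors: `send` is the internal choice `⊕`, `recv` the external
choice `&`. -/
inductive Pol : Type
  | send
  | recv
  deriving DecidableEq, Repr

/-- The dual polarity / constructor. -/
def Pol.dual : Pol → Pol
  | .send => .recv
  | .recv => .send

/-- Actions `!a` and `?a` over the alphabet `A`. -/
abbrev Act (A : Type) := Pol × A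

/-- Session types (de Bruijn representation of recursion variables).
An internal choice `⊕_{i∈I} !a_i.T_i` is `choice .send I br`; an external
choice `&_{i∈I} ?a_i.T_i` is `choice .recv I br`, where `br a` is the
continuation after message `a` (only relevant for `a ∈ I`). -/
inductive SType (A : Type) : Type
  | end_ : SType A
  | choice : Pol → Finset A → (A → SType A) → SType A
  | mu : SType A → SType A
  | var : ℕ → SType A

namespace SType

variable {A : Type}

/-- Lifting of a renaming under a binder. -/
def liftR (f : ℕ → ℕ) : ℕ → ℕ
  | 0 => 0
  | n + 1 => f n + 1

/-- Renaming of free type variables. -/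
def rename : SType A → (ℕ → ℕ) → SType A
  | .end_, _ => .end_
  | .choice p d br, f => .choice p d (fun a => (br a).rename f)
  | .mu T, f => .mu (T.rename (liftR f))
  | .var n, f => .var (f n)

/-- Lifting of a (parallel, capture-avoiding) substitution under a binder. -/
def liftS (σ : ℕ → SType A) : ℕ → SType A
  | 0 => .var 0
  | n + 1 => (σ n).rename Nat.succ

/-- Parallel capture-avoiding substitution. -/
def subst : SType A → (ℕ → SType A) → SType A
  | .end_, _ => .end_
  | .choice p d br, σ => .choice p d (fun a => (br a).subst σ)
  | .mu T, σ => .mu (T.subst (liftS σ))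
  | .var n, σ => σ n

/-- Capture-avoiding substitution `T[U/x]` of `U` for the free variable `x`. -/
def substVar (T : SType A) (x : ℕ) (U : SType A) : SType A :=
  T.subst (fun n => if n = x then U else .var n)

/-- `cons` of a type onto a substitution. -/
def consS (U : SType A) (σ : ℕ → SType A) : ℕ → SType A
  | 0 => U
  | n + 1 => σ n

/-- The unfolding `T[rec x.T / x]` of the body of `rec x.T`. -/
def unfold (T : SType A) : SType A :=
  T.subst (consS (.mu T) .var)

/-- All free variables are `< k`. -/
def closedUnder : SType A → ℕ → Prop
  | .end_, _ => True
  | .choice _ d br, k => ∀ a ∈ d, (br a).closedUnder k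
  | .mu T, k => T.closedUnder (k + 1)
  | .var n, k => n < k

/-- A closed session type (no free variables). -/
def closed (T : SType A) : Prop := T.closedUnder 0

/-- Variable `x` only occurs guarded (under a choice prefix). -/
def guardedVar : SType A → ℕ → Prop
  | .end_, _ => True
  | .choice _ _ _, _ => True
  | .mu T, x => T.guardedVar (x + 1)
  | .var m, x => m ≠ x

/-- Well-formed session types: contractive (every recursion variable is
guarded) and every choice has a nonempty, finite index set. -/
def wf : SType A → Prop
  | .end_ => True
  | .choice _ d br => d.Nonempty ∧ ∀ a ∈ d, (br a).wf
  | .mu T => T.wf ∧ T.guardedVar 0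
  | .var _ => True

/-- The dual session type: swaps `⊕` with `&` and `!` with `?`. -/
def dual : SType A → SType A
  | .end_ => .end_
  | .choice p d br => .choice p.dual d (fun a => (br a).dual)
  | .mu T => .mu T.dual
  | .var n => .var n

end SType

/-- The labelled transition system on session types. -/
inductive Step {A : Type} : SType A → Act A → SType A → Prop
  | choice {p : Pol} {d : Finset A} {br : A → SType A} {a : A} (h : a ∈ d) :
      Step (.choice p d br) (p, a) (br a)
  | unf {T : SType A} {α : Act A} {T' : SType A} :
      Step T.unfold α T' → Step (.mu T) α T'

/-- Modal μ-calculus formulae (greatest-fixpoint fragment), de Bruijn. -/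
inductive Formula (A : Type) : Type
  | tt : Formula A
  | ff : Formula A
  | and : Formula A → Formula A → Formula A
  | or : Formula A → Formula A → Formula A
  | box : Act A → Formula A → Formula A
  | dia : Act A → Formula A → Formula A
  | nu : Formula A → Formula A
  | var : ℕ → Formula A

namespace Formula

variable {A : Type}

/-- Renaming of free formula variables. -/
def rename : Formula A → (ℕ → ℕ) → Formula A
  | .tt, _ => .tt
  | .ff, _ => .ff
  | .and φ ψ, f => .and (φ.rename f) (ψ.rename f)
  | .or φ ψ, f => .or (φ.rename f) (ψ.rename f)
  | .box α φ, f => .box α (φ.rename f)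
  | .dia α φ, f => .dia α (φ.rename f)
  | .nu φ, f => .nu (φ.rename (SType.liftR f))
  | .var n, f => .var (f n)

/-- Lifting of a substitution under a `ν` binder. -/
def liftF (τ : ℕ → Formula A) : ℕ → Formula A
  | 0 => .var 0
  | n + 1 => (τ n).rename Nat.succ

/-- Parallel capture-avoiding substitution on formulae. -/
def subst : Formula A → (ℕ → Formula A) → Formula A
  | .tt, _ => .tt
  | .ff, _ => .ff
  | .and φ ψ, τ => .and (φ.subst τ) (ψ.subst τ)
  | .or φ ψ, τ => .or (φ.subst τ) (ψ.subst τ)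
  | .box α φ, τ => .box α (φ.subst τ)
  | .dia α φ, τ => .dia α (φ.subst τ)
  | .nu φ, τ => .nu (φ.subst (liftF τ))
  | .var n, τ => τ n

/-- Capture-avoiding substitution `φ[ψ/x]` for the free variable `x`. -/
def substVar (φ : Formula A) (x : ℕ) (ψ : Formula A) : Formula A :=
  φ.subst (fun n => if n = x then ψ else .var n)

/-- `cons` of a formula onto a substitution. -/
def consF (ψ : Formula A) (τ : ℕ → Formula A) : ℕ → Formula A
  | 0 => ψ
  | n + 1 => τ n

/-- Instantiation `φ[ψ/x]` of the variable bound by the enclosing binder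
(de Bruijn index `0`). -/
def inst (φ ψ : Formula A) : Formula A :=
  φ.subst (consF ψ .var)

/-- The `n`-th approximation `(νx.φ)ⁿ` of the fixpoint `νx.φ`, where `φ` is
the body:  `(νx.φ)⁰ = true` and `(νx.φ)ⁿ⁺¹ = φ[(νx.φ)ⁿ/x]`. -/
def nuApprox (φ : Formula A) : ℕ → Formula A
  | 0 => .tt
  | n + 1 => φ.inst (φ.nuApprox n)

/-- All free formula variables are `< k`. -/
def closedUnder : Formula A → ℕ → Prop
  | .tt, _ => True
  | .ff, _ => True
  | .and φ ψ, k => φ.closedUnder k ∧ ψ.closedUnder k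
  | .or φ ψ, k => φ.closedUnder k ∧ ψ.closedUnder k
  | .box _ φ, k => φ.closedUnder k
  | .dia _ φ, k => φ.closedUnder k
  | .nu φ, k => φ.closedUnder (k + 1)
  | .var n, k => n < k

/-- A closed formula. -/
def closed (φ : Formula A) : Prop := φ.closedUnder 0

/-- Variable `x` only occurs guarded (under a modality). -/
def guardedVar : Formula A → ℕ → Prop
  | .tt, _ => True
  | .ff, _ => True
  | .and φ ψ, x => φ.guardedVar x ∧ ψ.guardedVar x
  | .or φ ψ, x => φ.guardedVar x ∧ ψ.guardedVar x
  | .box _ _, _ => True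
  | .dia _ _, _ => True
  | .nu φ, x => φ.guardedVar (x + 1)
  | .var m, x => m ≠ x

/-- Contractive (well-formed) formulae. -/
def wf : Formula A → Prop
  | .tt => True
  | .ff => True
  | .and φ ψ => φ.wf ∧ ψ.wf
  | .or φ ψ => φ.wf ∧ ψ.wf
  | .box _ φ => φ.wf
  | .dia _ φ => φ.wf
  | .nu φ => φ.wf ∧ φ.guardedVar 0
  | .var _ => True

/-- The dual formula: swaps `!` and `?` in all modalities. -/
def dual : Formula A → Formula A
  | .tt => .tt
  | .ff => .ff
  | .and φ ψ => .and φ.dual ψ.dual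
  | .or φ ψ => .or φ.dual ψ.dual
  | .box (p, a) φ => .box (p.dual, a) φ.dual
  | .dia (p, a) φ => .dia (p.dual, a) φ.dual
  | .nu φ => .nu φ.dual
  | .var n => .var n

end Formula

/-- The satisfaction relation `T ⊨ φ` between session types and formulae,
defined inductively; `T ⊨ νx.φ` iff `T ⊨ (νx.φ)ⁿ` for all `n`. -/
inductive Sat {A : Type} : SType A → Formula A → Prop
  | tt {T : SType A} : Sat T .tt
  | and {T : SType A} {φ ψ : Formula A} : Sat T φ → Sat T ψ → Sat T (.and φ ψ)
  | orl {T : SType A} {φ ψ : Formula A} : Sat T φ → Sat T (.or φ ψ)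
  | orr {T : SType A} {φ ψ : Formula A} : Sat T ψ → Sat T (.or φ ψ)
  | box {T : SType A} {α : Act A} {φ : Formula A} :
      (∀ T', Step T α T' → Sat T' φ) → Sat T (.box α φ)
  | dia {T T' : SType A} {α : Act A} {φ : Formula A} :
      Step T α T' → Sat T' φ → Sat T (.dia α φ)
  | nu {T : SType A} {φ : Formula A} :
      (∀ n, Sat T (φ.nuApprox n)) → Sat T (.nu φ)

/-- One step of the subtyping rules (for parameter `s ∈ {⊕, &}`), including
the equi-recursive identifications of `rec x.T` with its unfolding. -/
def SubStep {A : Type} (s : Pol) (R : SType A → SType A → Prop)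
    (T U : SType A) : Prop :=
  (T = .end_ ∧ U = .end_)
  ∨ (∃ (dT : Finset A) (brT : A → SType A) (dU : Finset A) (brU : A → SType A),
      T = .choice s dT brT ∧ U = .choice s dU brU ∧ dT ⊆ dU ∧
        ∀ a ∈ dT, R (brT a) (brU a))
  ∨ (∃ (dT : Finset A) (brT : A → SType A) (dU : Finset A) (brU : A → SType A),
      T = .choice s.dual dT brT ∧ U = .choice s.dual dU brU ∧ dU ⊆ dT ∧
        ∀ a ∈ dU, R (brT a) (brU a))
  ∨ (∃ T₀, T = .mu T₀ ∧ R T₀.unfold U)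
  ∨ (∃ U₀, U = .mu U₀ ∧ R T U₀.unfold)

/-- The subtyping relation `≤_s`: the largest relation closed under the
(coinductively interpreted, equi-recursive) subtyping rules. -/
def Subtype {A : Type} (s : Pol) (T U : SType A) : Prop :=
  ∃ R : SType A → SType A → Prop,
    (∀ T U, R T U → SubStep s R T U) ∧ R T U

section CharFormula

variable {A : Type} [Fintype A] [LinearOrder A]

/-- Big conjunction of a list of formulae. -/
def bigAnd : List (Formula A) → Formula A
  | [] => .tt
  | φ :: rest => .and φ (bigAnd rest)

/-- Big disjunction of a list of formulae. -/
def bigOr : List (Formula A) → Formula A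
  | [] => .ff
  | φ :: rest => .or φ (bigOr rest)

/-- The (canonically ordered) list of all actions `𝒜 = {!a, ?a : a ∈ 𝔸}`. -/
def allActs (A : Type) [Fintype A] [LinearOrder A] : List (Act A) :=
  ((Finset.univ : Finset A).sort (· ≤ ·)).map (fun a => (Pol.send, a)) ++
    ((Finset.univ : Finset A).sort (· ≤ ·)).map (fun a => (Pol.recv, a))

/-- The characteristic formula `F(T, s)` of a session type `T` on the
constructor `s ∈ {⊕, &}`. -/
def charF : SType A → Pol → Formula A
  | .end_, _ => bigAnd ((allActs A).map (fun α => .box α .ff))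
  | .var n, _ => .var n
  | .mu T, s => .nu (charF T s)
  | .choice p d br, s =>
      if p = s then
        bigAnd ((d.sort (· ≤ ·)).map (fun a => .dia (p, a) (charF (br a) s)))
      else
        .and
          (bigAnd ((d.sort (· ≤ ·)).map (fun a => .box (p, a) (charF (br a) s))))
          (.and
            (bigOr ((d.sort (· ≤ ·)).map (fun a => Formula.dia (p, a) .tt)))
            (bigAnd (((allActs A).filter
                (fun α => ¬ (α.1 = p ∧ α.2 ∈ d))).map (fun α => .box α .ff))))

end CharFormula

/-- Synchronous semantics of a system of two session types. -/
inductive SysStep {A : Type} : SType A × SType A → SType A × SType A → Prop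
  | comm {T T' U U' : SType A} {p : Pol} {a : A} :
      Step T (p, a) T' → Step U (p.dual, a) U' → SysStep (T, U) (T', U')

/-- `T` is a choice with constructor `p`. -/
def isChoice {A : Type} (p : Pol) (T : SType A) : Prop :=
  ∃ (d : Finset A) (br : A → SType A), T = SType.choice p d br

/-- Error systems. -/
def Error {A : Type} (T U : SType A) : Prop :=
  (∃ p, isChoice p T ∧ isChoice p U)
  ∨ (∃ (dT : Finset A) (brT : A → SType A) (dU : Finset A) (brU : A → SType A),
      T = .choice .send dT brT ∧ U = .choice .recv dU brU ∧ ∃ a ∈ dT, a ∉ dU)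
  ∨ (∃ (dT : Finset A) (brT : A → SType A) (dU : Finset A) (brU : A → SType A),
      U = .choice .send dU brU ∧ T = .choice .recv dT brT ∧ ∃ a ∈ dU, a ∉ dT)
  ∨ (T = .end_ ∧ ∃ p, isChoice p U)
  ∨ (U = .end_ ∧ ∃ p, isChoice p T)

/-- A system is safe if no reachable system is an error. -/
def Safe {A : Type} (T U : SType A) : Prop :=
  ∀ S' : SType A × SType A,
    Relation.ReflTransGen SysStep (T, U) S' → ¬ Error S'.1 S'.2

/-- A substitution is closed when all its components are closed types. -/
def closedSubst {A : Type} (σ : ℕ → SType A) : Prop :=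
  ∀ n, (σ n).closed

/-- Extended subtyping: all closed instantiations of the free variables are
related by `≤_s`. -/
def ExtSub {A : Type} (s : Pol) (T U : SType A) : Prop :=
  ∀ σ : ℕ → SType A, closedSubst σ → Subtype s (T.subst σ) (U.subst σ)

/-- The `k`-limited subtyping derivations on closed types (equi-recursive:
recursion may be unfolded freely at the same level; premises are at level
`k - 1`; everything holds at level `0`). -/
inductive SubK {A : Type} (s : Pol) : ℕ → SType A → SType A → Prop
  | zero {T U : SType A} : SubK s 0 T U
  | end_ {k : ℕ} : SubK s (k + 1) .end_ .end_
  | ch {k : ℕ} {dT : Finset A} {brT : A → SType A} {dU : Finset A}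
      {brU : A → SType A} :
      dT ⊆ dU → (∀ a ∈ dT, SubK s k (brT a) (brU a)) →
      SubK s (k + 1) (.choice s dT brT) (.choice s dU brU)
  | coch {k : ℕ} {dT : Finset A} {brT : A → SType A} {dU : Finset A}
      {brU : A → SType A} :
      dU ⊆ dT → (∀ a ∈ dU, SubK s k (brT a) (brU a)) →
      SubK s (k + 1) (.choice s.dual dT brT) (.choice s.dual dU brU)
  | recL {k : ℕ} {T U : SType A} :
      SubK s (k + 1) T.unfold U → SubK s (k + 1) (.mu T) U
  | recR {k : ℕ} {T U : SType A} :
      SubK s (k + 1) T U.unfold → SubK s (k + 1) T (.mu U)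

/-- The extended `k`-limited subtyping `≤_{s,e,k}`. -/
def ExtSubK {A : Type} (s : Pol) (k : ℕ) (T U : SType A) : Prop :=
  ∀ σ : ℕ → SType A, closedSubst σ → SubK s k (T.subst σ) (U.subst σ)

/-- Extended satisfaction `T ⊨_e φ`: every closed instantiation of the type
by types `V_i` and of the formula by closed formulae `ψ_i` with `V_i ⊨ ψ_i`
(at the same variable) satisfies the instantiated formula. -/
def SatE {A : Type} (T : SType A) (φ : Formula A) : Prop :=
  ∀ (σ : ℕ → SType A) (τ : ℕ → Formula A),
    closedSubst σ → (∀ n, (τ n).closed) → (∀ n, Sat (σ n) (τ n)) →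
    Sat (T.subst σ) (φ.subst τ)

/-- The `k`-limited extended satisfaction relation `⊨_{e,k}`. -/
inductive SatK {A : Type} : ℕ → SType A → Formula A → Prop
  | zero {T : SType A} {φ : Formula A} : SatK 0 T φ
  | tt {k : ℕ} {T : SType A} : SatK (k + 1) T .tt
  | and {k : ℕ} {T : SType A} {φ ψ : Formula A} :
      SatK (k + 1) T φ → SatK (k + 1) T ψ → SatK (k + 1) T (.and φ ψ)
  | orl {k : ℕ} {T : SType A} {φ ψ : Formula A} :
      SatK (k + 1) T φ → SatK (k + 1) T (.or φ ψ)
  | orr {k : ℕ} {T : SType A} {φ ψ : Formula A} :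
      SatK (k + 1) T ψ → SatK (k + 1) T (.or φ ψ)
  | box {k : ℕ} {T : SType A} {α : Act A} {φ : Formula A} :
      (∀ σ : ℕ → SType A, closedSubst σ →
        ∀ T', Step (T.subst σ) α T' → SatK k T' φ) →
      SatK (k + 1) T (.box α φ)
  | dia {k : ℕ} {T : SType A} {α : Act A} {φ : Formula A}
      (W : ∀ σ : ℕ → SType A, closedSubst σ → SType A) :
      (∀ (σ : ℕ → SType A) (h : closedSubst σ), Step (T.subst σ) α (W σ h)) →
      (∀ (σ : ℕ → SType A) (h : closedSubst σ), SatK k (W σ h) φ) →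
      SatK (k + 1) T (.dia α φ)
  | nu {k : ℕ} {T : SType A} {φ : Formula A} :
      (∀ n, SatK (k + 1) T (φ.nuApprox n)) → SatK (k + 1) T (.nu φ)

/-- Type constructors `ℭ`: `end`, `⊕A` and `&A`. -/
inductive Ctor (A : Type) : Type
  | end_ : Ctor A
  | choice : Pol → Finset A → Ctor A

/-- The labelling of the term automaton `𝒜(T)`: the constructor of (the
unfolding of) a session type. -/
inductive HasCtor {A : Type} : SType A → Ctor A → Prop
  | end_ : HasCtor .end_ .end_
  | choice {p : Pol} {d : Finset A} {br : A → SType A} :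
      HasCtor (.choice p d br) (.choice p d)
  | unf {T : SType A} {c : Ctor A} : HasCtor T.unfold c → HasCtor (.mu T) c

/-- The order `⊑` on type constructors. -/
def CtorLe {A : Type} : Ctor A → Ctor A → Prop
  | .end_, .end_ => True
  | .choice .send d₁, .choice .send d₂ => d₁ ⊆ d₂
  | .choice .recv d₁, .choice .recv d₂ => d₂ ⊆ d₁
  | _, _ => False

/-- Transitions of the product automaton `𝒜(T) × 𝒜(U)`: a common action. -/
def ProdStep {A : Type} (S S' : SType A × SType A) : Prop :=
  ∃ α : Act A, Step S.1 α S'.1 ∧ Step S.2 α S'.2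

end SessionCF
namespace SessionCF
namespace Formula

variable {A : Type}

theorem liftR_comp (f g : ℕ → ℕ) :
    SType.liftR g ∘ SType.liftR f = SType.liftR (g ∘ f) := by
  funext n; cases n <;> rfl

theorem rename_rename (φ : Formula A) :
    ∀ f g, (φ.rename f).rename g = φ.rename (g ∘ f) := by
  induction φ <;> intro f g <;>
    simp_all [rename, liftR_comp]

theorem subst_rename (φ : Formula A) :
    ∀ (f : ℕ → ℕ) (τ : ℕ → Formula A),
      (φ.rename f).subst τ = φ.subst (τ ∘ f) := by
  induction φ <;> intro f τ <;> simp_all [rename, subst]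
  case nu φ ih =>
    congr 1
    funext n; cases n <;> rfl

theorem rename_subst (φ : Formula A) :
    ∀ (τ : ℕ → Formula A) (f : ℕ → ℕ),
      (φ.subst τ).rename f = φ.subst (fun n => (τ n).rename f) := by
  induction φ <;> intro τ f <;> simp_all [rename, subst]
  case nu φ ih =>
    congr 1
    funext n; cases n with
    | zero => rfl
    | succ n =>
      simp [liftF, rename_rename]
      congr 1

theorem subst_subst (φ : Formula A) :
    ∀ (σ ρ : ℕ → Formula A),
      (φ.subst σ).subst ρ = φ.subst (fun n => (σ n).subst ρ) := by
  induction φ <;> intro σ ρ <;> simp_all [subst]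
  case nu φ ih =>
    congr 1
    funext n; cases n with
    | zero => rfl
    | succ n =>
      simp [liftF, subst_rename, rename_subst]
      congr 1

theorem subst_id (φ : Formula A) : φ.subst .var = φ := by
  induction φ <;> simp_all [subst]
  case nu φ ih =>
    have : liftF (.var : ℕ → Formula A) = .var := by
      funext n; cases n <;> rfl
    rw [this, ih]

theorem inst_subst (φ : Formula A) (τ : ℕ → Formula A) (X : Formula A) :
    (φ.subst (liftF τ)).inst X = φ.subst (consF X τ) := by
  unfold inst
  rw [subst_subst]
  congr 1
  funext n; cases n with
  | zero => rfl
  | succ n =>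
    simp [liftF, subst_rename]
    have : (consF X (.var : ℕ → Formula A)) ∘ Nat.succ = .var := by
      funext m; rfl
    rw [this, subst_id]
    rfl

end Formula

theorem step_det {A : Type} {T T₁ T₂ : SType A} {α : Act A}
    (h₁ : Step T α T₁) (h₂ : Step T α T₂) : T₁ = T₂ := by
  induction h₁ with
  | choice h => cases h₂; rfl
  | unf h ih => cases h₂ with | unf h' => exact ih h'

theorem satK_tt_any {A : Type} (k : ℕ) (T : SType A) : SatK k T .tt := by
  cases k with
  | zero => exact .zero
  | succ k => exact .tt

theorem satK_subst_mono {A : Type} (φ : Formula A) :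
    ∀ (τ τ' : ℕ → Formula A),
      (∀ v (j : ℕ) (T : SType A), SatK j T (τ v) → SatK j T (τ' v)) →
      ∀ (j : ℕ) (T : SType A), SatK j T (φ.subst τ) → SatK j T (φ.subst τ') := by
  induction φ with
  | tt => exact fun τ τ' h j T hs => hs
  | ff => exact fun τ τ' h j T hs => hs
  | var v => exact fun τ τ' h j T hs => h v j T hs
  | and φ ψ ihφ ihψ =>
    intro τ τ' h j T hs
    cases hs with
    | zero => exact .zero
    | and a b => exact .and (ihφ τ τ' h _ _ a) (ihψ τ τ' h _ _ b)
  | or φ ψ ihφ ihψ =>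
    intro τ τ' h j T hs
    cases hs with
    | zero => exact .zero
    | orl a => exact .orl (ihφ τ τ' h _ _ a)
    | orr b => exact .orr (ihψ τ τ' h _ _ b)
  | box α φ ih =>
    intro τ τ' h j T hs
    cases hs with
    | zero => exact .zero
    | box hb => exact .box (fun σ hσ T' hst => ih τ τ' h _ _ (hb σ hσ T' hst))
  | dia α φ ih =>
    intro τ τ' h j T hs
    cases hs with
    | zero => exact .zero
    | dia W hstep hsat =>
      exact .dia W hstep (fun σ hσ => ih τ τ' h _ _ (hsat σ hσ))
  | nu φ ih =>
    intro τ τ' h j T hs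
    have claim : ∀ (n j : ℕ) (T : SType A),
        SatK j T ((φ.subst (Formula.liftF τ)).nuApprox n) →
        SatK j T ((φ.subst (Formula.liftF τ')).nuApprox n) := by
      intro n
      induction n with
      | zero => exact fun j T hx => hx
      | succ n ihn =>
        intro j T hx
        rw [Formula.nuApprox, Formula.inst_subst] at hx ⊢
        refine ih _ _ ?_ j T hx
        intro v
        cases v with
        | zero => exact ihn
        | succ v => exact h v
    cases hs with
    | zero => exact .zero
    | nu f => exact .nu (fun n => claim n _ T (f n))

theorem satK_subst_chain {A : Type} (σ : ℕ → ℕ → Formula A)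
    (hchain : ∀ v n (j : ℕ) (T : SType A),
      SatK j T (σ (n + 1) v) → SatK j T (σ n v))
    (χ : Formula A) {n m : ℕ} (hnm : n ≤ m) :
    ∀ (j : ℕ) (T : SType A), SatK j T (χ.subst (σ m)) → SatK j T (χ.subst (σ n)) := by
  have hpt : ∀ v (j : ℕ) (T : SType A), SatK j T (σ m v) → SatK j T (σ n v) := by
    intro v
    induction hnm with
    | refl => exact fun j T => id
    | step h ih => exact fun j T hx => ih j T (hchain v _ j T hx)
  exact satK_subst_mono χ (σ m) (σ n) hpt

theorem satK_limit {A : Type} (ψ : Formula A) :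
    ∀ (σ : ℕ → ℕ → Formula A) (σi : ℕ → Formula A),
      (∀ v n (j : ℕ) (T : SType A), SatK j T (σ (n + 1) v) → SatK j T (σ n v)) →
      (∀ v (j : ℕ) (T : SType A), (∀ n, SatK j T (σ n v)) → SatK j T (σi v)) →
      ∀ (k : ℕ) (T : SType A),
        (∀ n, SatK k T (ψ.subst (σ n))) → SatK k T (ψ.subst σi) := by
  induction ψ with
  | tt => exact fun σ σi hc hl k T h => h 0
  | ff => exact fun σ σi hc hl k T h => h 0
  | var v => exact fun σ σi hc hl k T h => hl v k T h
  | and φ ψ ihφ ihψ =>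
    intro σ σi hc hl k T h
    cases k with
    | zero => exact .zero
    | succ k =>
      have h1 : ∀ n, SatK (k + 1) T (φ.subst (σ n)) := by
        intro n; cases h n with | and a b => exact a
      have h2 : ∀ n, SatK (k + 1) T (ψ.subst (σ n)) := by
        intro n; cases h n with | and a b => exact b
      exact .and (ihφ σ σi hc hl _ _ h1) (ihψ σ σi hc hl _ _ h2)
  | or φ ψ ihφ ihψ =>
    intro σ σi hc hl k T h
    cases k with
    | zero => exact .zero
    | succ k =>
      by_cases hall : ∀ n, SatK (k + 1) T (φ.subst (σ n))
      · exact .orl (ihφ σ σi hc hl _ _ hall)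
      · push_neg at hall
        obtain ⟨n₁, hn₁⟩ := hall
        have h2 : ∀ n, SatK (k + 1) T (ψ.subst (σ n)) := by
          intro n
          cases h (max n n₁) with
          | orl a =>
            exact absurd (satK_subst_chain σ hc φ (le_max_right n n₁) _ _ a) hn₁
          | orr b =>
            exact satK_subst_chain σ hc ψ (le_max_left n n₁) _ _ b
        exact .orr (ihψ σ σi hc hl _ _ h2)
  | box α φ ih =>
    intro σ σi hc hl k T h
    cases k with
    | zero => exact .zero
    | succ k =>
      refine .box (fun σc hσc T' hst => ?_)
      refine ih σ σi hc hl k T' (fun n => ?_)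
      cases h n with | box hb => exact hb σc hσc T' hst
  | dia α φ ih =>
    intro σ σi hc hl k T h
    cases k with
    | zero => exact .zero
    | succ k =>
      cases h 0 with
      | dia W hstep hsat =>
        refine .dia W hstep (fun σc hσc => ?_)
        refine ih σ σi hc hl k _ (fun n => ?_)
        cases h n with
        | dia Wn hstepn hsatn =>
          have he : Wn σc hσc = W σc hσc :=
            step_det (hstepn σc hσc) (hstep σc hσc)
          rw [← he]
          exact hsatn σc hσc
  | nu φ ih =>
    intro σ σi hc hl k T h
    cases k with
    | zero => exact .zero
    | succ k =>
      have chainB : ∀ m n (j : ℕ) (T : SType A),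
          SatK j T ((φ.subst (Formula.liftF (σ (n + 1)))).nuApprox m) →
          SatK j T ((φ.subst (Formula.liftF (σ n))).nuApprox m) := by
        intro m
        induction m with
        | zero => exact fun n j T hx => hx
        | succ m ihm =>
          intro n j T hx
          rw [Formula.nuApprox, Formula.inst_subst] at hx ⊢
          refine satK_subst_mono φ _ _ ?_ j T hx
          intro v
          cases v with
          | zero => exact ihm n
          | succ v => exact hc v n
      have claim : ∀ m (j : ℕ) (T : SType A),
          (∀ n, SatK j T ((φ.subst (Formula.liftF (σ n))).nuApprox m)) →
          SatK j T ((φ.subst (Formula.liftF σi)).nuApprox m) := by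
        intro m
        induction m with
        | zero => exact fun j T hx => hx 0
        | succ m ihm =>
          intro j T hx
          rw [Formula.nuApprox, Formula.inst_subst]
          refine ih (fun n => Formula.consF
              ((φ.subst (Formula.liftF (σ n))).nuApprox m) (σ n))
            (Formula.consF ((φ.subst (Formula.liftF σi)).nuApprox m) σi)
            ?_ ?_ j T ?_
          · intro v
            cases v with
            | zero => exact fun n => chainB m n
            | succ v => exact fun n => hc v n
          · intro v
            cases v with
            | zero => exact ihm
            | succ v => exact hl v
          · intro n
            have := hx n
            rw [Formula.nuApprox, Formula.inst_subst] at this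
            exact this
      refine .nu (fun m => claim m (k + 1) T (fun n => ?_))
      cases h n with | nu f => exact f m

theorem satK_approx_of_nu {A : Type} {k : ℕ} {T : SType A} {φ : Formula A}
    (h : SatK k T (.nu φ)) (n : ℕ) : SatK k T (φ.nuApprox n) := by
  cases h with
  | zero => exact .zero
  | nu f => exact f n

theorem satK_nu_of_approx {A : Type} {k : ℕ} {T : SType A} {φ : Formula A}
    (h : ∀ n, SatK k T (φ.nuApprox n)) : SatK k T (.nu φ) := by
  cases k with
  | zero => exact .zero
  | succ k => exact .nu h

theorem satK_approx_succ_mono {A : Type} (φ : Formula A) :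
    ∀ n (j : ℕ) (T : SType A),
      SatK j T (φ.nuApprox (n + 1)) → SatK j T (φ.nuApprox n) := by
  intro n
  induction n with
  | zero => exact fun j T _ => satK_tt_any j T
  | succ n ihn =>
    intro j T h
    refine satK_subst_mono φ (Formula.consF (φ.nuApprox (n + 1)) .var)
      (Formula.consF (φ.nuApprox n) .var) ?_ j T h
    intro v
    cases v with
    | zero => exact ihn
    | succ v => exact fun j T => id

end SessionCF


/-- For every `k ≥ 0`, session type `T`, (bound) variable and
formula `φ`: `T ⊨_{e,k} νx.φ` iff `T ⊨_{e,k} φ[νx.φ/x]`. -/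
theorem satK_nu_iff_satK_inst {A : Type}
    (k : ℕ) (T : SessionCF.SType A) (φ : SessionCF.Formula A)
    (hT : T.wf) (hφ : (SessionCF.Formula.nu φ).wf) :
    SessionCF.SatK k T (.nu φ) ↔ SessionCF.SatK k T (φ.inst (.nu φ)) := by
  open SessionCF in
  constructor
  · intro h
    have := satK_limit φ (fun n => Formula.consF (φ.nuApprox n) .var)
      (Formula.consF (.nu φ) .var)
      (fun v => by
        cases v with
        | zero => exact fun n => satK_approx_succ_mono φ n
        | succ v => exact fun n j T => id)
      (fun v => by
        cases v with
        | zero => exact fun j T hx => satK_nu_of_approx hx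
        | succ v => exact fun j T hx => hx 0)
      k T (fun n => satK_approx_of_nu h (n + 1))
    exact this
  · intro h
    refine satK_nu_of_approx (fun n => ?_)
    cases n with
    | zero => exact satK_tt_any k T
    | succ n =>
      refine satK_subst_mono φ (Formula.consF (.nu φ) .var)
        (Formula.consF (φ.nuApprox n) .var) ?_ k T h
      intro v
      cases v with
      | zero => exact fun j T hj => satK_approx_of_nu hj n
      | succ v => exact fun j T => id
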